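/- Let G be a cofinitary group, (s,E) a condition of Zhang's forcing Z_G, and n ∈ ℕ not belonging to any closed orbit of s. Then there is K ∈ ℕ such that for every k > K there is a condition (t,E) of Z_G with (t,E) ≤ (s,E) such that the orbit O_t(n) is a closed orbit of t and |O_t(n)| = k. -/

import Mathlib

noncomputable section

/-- Permutations of the natural numbers (elements of `S_∞`). -/
abbrev Perm' := Equiv.Perm ℕ

/-- A letter of a word over `G ∪ {x, x⁻¹}`: either a group element (of `S_∞`),
or `Sum.inr true` standing for `x`, or `Sum.inr false` standing for `x⁻¹`. -/
abbrev Letter := Perm' ⊕ Bool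

/-- A word is a list of letters, written left to right
(the leftmost letter is applied last). -/
abbrev Word := List Letter

/-- A subgroup of `S_∞` is cofinitary if every non-identity element
has only finitely many fixed points. -/
def Cofinitary (G : Subgroup Perm') : Prop :=
  ∀ g ∈ G, g ≠ 1 → {n : ℕ | g n = n}.Finite

/-- A set of pairs is a partial injection (functional and injective). -/
def PartInj (s : Set (ℕ × ℕ)) : Prop :=
  (∀ ⦃a b c⦄, (a, b) ∈ s → (a, c) ∈ s → b = c) ∧
  (∀ ⦃a b c⦄, (a, c) ∈ s → (b, c) ∈ s → a = b)

/-- Domain of a partial injection given as a set of pairs. -/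
def pdom (s : Set (ℕ × ℕ)) : Set ℕ := Prod.fst '' s

/-- Range of a partial injection given as a set of pairs. -/
def pran (s : Set (ℕ × ℕ)) : Set ℕ := Prod.snd '' s

/-- The relation given by substituting the partial injection `s` for `x`
(and `s⁻¹` for `x⁻¹`) in a single letter. -/
def letterRel (s : Set (ℕ × ℕ)) : Letter → ℕ → ℕ → Prop
  | Sum.inl g => fun a b => g a = b
  | Sum.inr true => fun a b => (a, b) ∈ s
  | Sum.inr false => fun a b => (b, a) ∈ s

/-- The relation `w[s]`: evaluation of a word at the partial injection `s`,
composing the letter relations (rightmost letter applied first). -/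
def wordRel (s : Set (ℕ × ℕ)) : Word → ℕ → ℕ → Prop
  | [] => fun a b => a = b
  | l :: w => fun a b => ∃ c, wordRel s w a c ∧ letterRel s l c b

/-- `fix(w[s])`, the set of fixed points of the partial injection `w[s]`. -/
def wordFix (s : Set (ℕ × ℕ)) (w : Word) : Set ℕ := {n | wordRel s w n n}

/-- The word `x^k` for an integer `k` (for `k < 0`, `|k|` copies of `x⁻¹`). -/
def xpow (k : ℤ) : Word :=
  if 0 ≤ k then List.replicate k.toNat (Sum.inr true : Letter)
  else List.replicate (-k).toNat (Sum.inr false : Letter)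

/-- The block `g x^k` as a word. -/
def blockWord (p : Perm' × ℤ) : Word := Sum.inl p.1 :: xpow p.2

/-- `w` is a nice word (member of `W*_G`): `w = x^{k₀}` with `k₀ > 0`, or
`w = g_l x^{k_l} ⋯ g₁ x^{k₁} g₀ x^{k₀}` with `k₀ > 0`, all `k_i ≠ 0` and all
`g_i ∈ G \ {id}`. -/
def IsNice (G : Subgroup Perm') (w : Word) : Prop :=
  (∃ k : ℕ, 0 < k ∧ w = xpow (k : ℤ)) ∨
  (∃ bs : List (Perm' × ℤ), bs ≠ [] ∧
    (∀ p ∈ bs, p.1 ∈ G ∧ p.1 ≠ 1 ∧ p.2 ≠ 0) ∧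
    (∃ p, bs.getLast? = some p ∧ 0 < p.2) ∧
    w = (bs.map blockWord).flatten)

/-- The number of occurrences of `x` or `x⁻¹` in a word. -/
def xOccurrences (w : Word) : ℕ := w.countP (fun l => l.isRight)

/-- `w ∈ W¹_G`: a nice word with exactly one occurrence of `x` or `x⁻¹`. -/
def IsNiceOne (G : Subgroup Perm') (w : Word) : Prop :=
  IsNice G w ∧ xOccurrences w = 1

/-- `(s, E)` is a condition of Zhang's forcing `Z_G`: `s` is a finite partial
injection and `E` a finite set of nice words. -/
def ZCond (G : Subgroup Perm') (s : Set (ℕ × ℕ)) (E : Set Word) : Prop :=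
  s.Finite ∧ PartInj s ∧ E.Finite ∧ ∀ w ∈ E, IsNice G w

/-- `(t, F) ≤ (s, E)` in Zhang's forcing: `s ⊆ t`, `E ⊆ F`, and
`fix(w[t]) = fix(w[s])` for every `w ∈ E`. -/
def ZLe (t : Set (ℕ × ℕ)) (F : Set Word) (s : Set (ℕ × ℕ)) (E : Set Word) : Prop :=
  s ⊆ t ∧ E ⊆ F ∧ ∀ w ∈ E, wordFix t w = wordFix s w

/-- An injective tree: a nonempty set of finite sequences closed under initial
segments, all of whose elements are injective sequences. -/
def IsInjTree (T : Set (List ℕ)) : Prop :=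
  T.Nonempty ∧ (∀ t ∈ T, ∀ s : List ℕ, s <+: t → s ∈ T) ∧ ∀ t ∈ T, t.Nodup

/-- `T ∈ I_i(P)⁺`: an injective tree such that for every `s ∈ T` and every
finite `P₀ ⊆ P` there are `t ∈ T` extending `s` and `k ∈ dom(t) \ dom(s)` with
`t(k) ≠ f(k)` for all `f ∈ P₀`. -/
def TreePos (P : Set Perm') (T : Set (List ℕ)) : Prop :=
  IsInjTree T ∧
  ∀ s ∈ T, ∀ P₀ ⊆ P, P₀.Finite →
    ∃ t ∈ T, s <+: t ∧ ∃ k, s.length ≤ k ∧ k < t.length ∧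
      ∀ f ∈ P₀, t.getD k 0 ≠ f k

/-- A set `O` is closed under a relation `R` and its inverse. -/
def RelClosed (R : ℕ → ℕ → Prop) (O : Set ℕ) : Prop :=
  ∀ a b, R a b → (a ∈ O ↔ b ∈ O)

/-- The orbit of `n` under the (partial injective) relation `R`: the smallest
set containing `n` closed under applications of `R` and `R⁻¹`. -/
def relOrbit (R : ℕ → ℕ → Prop) (n : ℕ) : Set ℕ :=
  ⋂₀ {O : Set ℕ | n ∈ O ∧ RelClosed R O}

/-- The set of all orbits of the relation `R`. -/
def relOrbits (R : ℕ → ℕ → Prop) : Set (Set ℕ) := {O | ∃ n, O = relOrbit R n}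

/-- Domain of a relation. -/
def relDom (R : ℕ → ℕ → Prop) : Set ℕ := {a | ∃ b, R a b}

/-- Range of a relation. -/
def relRan (R : ℕ → ℕ → Prop) : Set ℕ := {b | ∃ a, R a b}

/-- The set of closed orbits of `R`: those orbits contained in `dom ∩ ran`. -/
def relClosedOrbits (R : ℕ → ℕ → Prop) : Set (Set ℕ) :=
  {O ∈ relOrbits R | O ⊆ relDom R ∩ relRan R}

/-- The relation of a partial injection given as a set of pairs. -/
def sRel (s : Set (ℕ × ℕ)) : ℕ → ℕ → Prop := fun a b => (a, b) ∈ s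

/-- The relation (graph) of a permutation of `ℕ`. -/
def permRel (f : Perm') : ℕ → ℕ → Prop := fun a b => f a = b

/-- A partial injection `s` is nice: every closed orbit has its minimum below
the minimum of the complement of the union of all closed orbits. -/
def NiceInj (s : Set (ℕ × ℕ)) : Prop :=
  ∀ O ∈ relClosedOrbits (sRel s),
    sInf O < sInf {n : ℕ | n ∉ ⋃₀ relClosedOrbits (sRel s)}

/-- The position of a closed orbit `O` of `s` in the well-order of closed
orbits by their minima. -/
def orbitIndex (s : Set (ℕ × ℕ)) (O : Set ℕ) : ℕ :=
  {P ∈ relClosedOrbits (sRel s) | sInf P < sInf O}.ncard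

/-- `s` codes `r`, i.e. `o_s ⊆ r`: the `n`-th closed orbit (in the well-order
by minima) has cardinality congruent to `r(n)` mod 2. -/
def CodesReal (s : Set (ℕ × ℕ)) (r : ℕ → Fin 2) : Prop :=
  ∀ O ∈ relClosedOrbits (sRel s), O.ncard % 2 = (r (orbitIndex s O) : ℕ)

/-- `(s, E)` is a condition of `Z_G(r)`. -/
def ZrCond (G : Subgroup Perm') (r : ℕ → Fin 2)
    (s : Set (ℕ × ℕ)) (E : Set Word) : Prop :=
  ZCond G s E ∧ NiceInj s ∧ CodesReal s r

/-- The `n`-th prime. -/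
def pPrime (n : ℕ) : ℕ := Nat.nth Nat.Prime n

/-- The orbit-coding function `o†`: `o†(n)` is the number of closed orbits of
`R` of cardinality `p_n`, modulo 2. -/
def odag (R : ℕ → ℕ → Prop) (n : ℕ) : ℕ :=
  {O ∈ relClosedOrbits R | O.ncard = pPrime n}.ncard % 2

/-- `v^k`: the word `v` concatenated `k` times. -/
def wpow (v : Word) (k : ℕ) : Word := (List.replicate k v).flatten

/-- `w ∈ W†_G`: a nice word that is indecomposable, i.e. not of the form `v^k`
for a nice word `v` and `k > 1`. -/
def Indecomposable (G : Subgroup Perm') (w : Word) : Prop :=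
  IsNice G w ∧ ¬∃ v : Word, IsNice G v ∧ ∃ k : ℕ, 1 < k ∧ w = wpow v k

/-- The inverse of a letter. -/
def letterInv : Letter → Letter
  | Sum.inl g => Sum.inl g⁻¹
  | Sum.inr b => Sum.inr (!b)

/-- The inverse of a word. -/
def wordInv (w : Word) : Word := (w.map letterInv).reverse

/-- `E` is closed under cyclic permutations and inverses thereof within `W*_G`. -/
def CyclClosed (G : Subgroup Perm') (E : Set Word) : Prop :=
  ∀ w ∈ E, ∀ w₀ w₁ : Word, w = w₀ ++ w₁ →
    (IsNice G (w₁ ++ w₀) → w₁ ++ w₀ ∈ E) ∧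
    (IsNice G (wordInv (w₁ ++ w₀)) → wordInv (w₁ ++ w₀) ∈ E)

/-- `(s, E)` is a condition of `Z†_G(r)`: a Zhang condition such that `E` is
closed under cyclic permutations and inverses thereof in `W*_G`, and whenever
`w = v^k ∈ E` with `v ∈ W†_G` then `v^l ∈ E` for all `0 < l ≤ k` and `o†_{v[s]}`
codes `r` up to `n` for every `n` with `p_n ≤ k`. -/
def ZdagCond (G : Subgroup Perm') (r : ℕ → Fin 2)
    (s : Set (ℕ × ℕ)) (E : Set Word) : Prop :=
  ZCond G s E ∧ CyclClosed G E ∧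
  ∀ w ∈ E, ∀ v : Word, ∀ k : ℕ, Indecomposable G v → w = wpow v k →
    (∀ l : ℕ, 0 < l → l ≤ k → wpow v l ∈ E) ∧
    (∀ n : ℕ, pPrime n ≤ k → ∀ i ≤ n, odag (wordRel s v) i = (r i : ℕ))

/-- Substituting the permutation `f` for `x` in a letter. -/
def letterPerm (f : Perm') : Letter → Perm'
  | Sum.inl g => g
  | Sum.inr true => f
  | Sum.inr false => f⁻¹

/-- `w[f]`: evaluation of a word at the permutation `f`. -/
def wordPerm (f : Perm') (w : Word) : Perm' := (w.map (letterPerm f)).prod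

/-- Two functions are eventually different. -/
def EvDiff (f g : ℕ → ℕ) : Prop := {k : ℕ | f k = g k}.Finite

/-- A set of permutations is an eventually different family. -/
def EDFamily (P : Set Perm') : Prop :=
  ∀ f ∈ P, ∀ g ∈ P, f ≠ g → EvDiff f g

/-!
The orbit of `n` under `s` is a maximal path `a₀ → ⋯ → a_{m-1}`: it cannot be a cycle, since
`n` lies in no closed orbit. Close it into a cycle of length `k` through `k - m` fresh points
that are generic for the finitely many `g ∈ G` occurring in `E`: no such `g` maps a fresh point
into `D ∪ fresh`, or a point of `D ∪ fresh` onto a fresh point, where `D ⊇ dom s ∪ ran s`.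
Evaluating a block word `w ∈ E` at the new partial injection `t`, every run `x^j` ends in
`D ∪ fresh` and is followed by some `g`, so genericity keeps the computation of a fixed point
inside `D`. A run with `|j| ≤ |w| < k - m` starting on the path cannot cross the fresh arc and
come back, so it is a run of `s`; and `x^j` with `0 < j < k` fixes no point of a `k`-cycle.
Hence `fix(w[t]) = fix(w[s])` for `k > m + max_{w ∈ E} |w|`.
-/

namespace ZhangForcing

section Words

variable {s t : Set (ℕ × ℕ)}

lemma mem_pdom {x : ℕ} : x ∈ pdom s ↔ ∃ y, (x, y) ∈ s := by
  simp [pdom]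

lemma mem_pran {y : ℕ} : y ∈ pran s ↔ ∃ x, (x, y) ∈ s := by
  simp [pran]

lemma wordRel_append (u v : Word) (x y : ℕ) :
    wordRel s (u ++ v) x y ↔ ∃ c, wordRel s v x c ∧ wordRel s u c y := by
  induction u generalizing y with
  | nil => simp [wordRel]
  | cons l u ih =>
    simp only [List.cons_append, wordRel, ih]
    exact ⟨fun ⟨c', ⟨c, hv, hu⟩, hl⟩ => ⟨c, hv, c', hu, hl⟩,
      fun ⟨c, hv, c', hu, hl⟩ => ⟨c', ⟨c, hv, hu⟩, hl⟩⟩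

lemma wordRel_mono (h : s ⊆ t) {w : Word} {x y : ℕ} (hw : wordRel s w x y) :
    wordRel t w x y := by
  induction w generalizing y with
  | nil => exact hw
  | cons l w ih =>
    obtain ⟨c, hc, hl⟩ := hw
    refine ⟨c, ih hc, ?_⟩
    rcases l with g | _ | _
    exacts [hl, h hl, h hl]

lemma xpow_eq_replicate (k : ℤ) :
    xpow k = List.replicate k.natAbs (Sum.inr (decide (0 ≤ k))) := by
  unfold xpow
  split_ifs with hk <;> simp only [hk, decide_true, decide_false] <;> congr 1 <;> omega

lemma wordRel_replicate_false_iff (p : ℕ) (x y : ℕ) :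
    wordRel s (List.replicate p (Sum.inr false)) x y ↔
      wordRel s (List.replicate p (Sum.inr true)) y x := by
  induction p generalizing x y with
  | zero => exact eq_comm
  | succ p ih =>
    rw [List.replicate_succ, List.replicate_succ', wordRel_append]
    simp only [wordRel, letterRel, ih]
    aesop

lemma mem_of_wordRel_replicate {F : Set ℕ} (hF : ∀ a b, (a, b) ∈ s → a ∈ F ∧ b ∈ F)
    {p : ℕ} (hp : p ≠ 0) {b : Bool} {x y : ℕ}
    (h : wordRel s (List.replicate p (Sum.inr b)) x y) : x ∈ F ∧ y ∈ F := by
  have hl : ∀ {a c}, letterRel s (Sum.inr b) a c → a ∈ F ∧ c ∈ F := by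
    intro a c hac
    cases b
    exacts [(hF c a hac).symm, hF a c hac]
  obtain ⟨q, rfl⟩ := Nat.exists_eq_succ_of_ne_zero hp
  refine ⟨?_, ?_⟩
  · rw [List.replicate_succ', wordRel_append] at h
    obtain ⟨c, ⟨x', rfl, hx⟩, -⟩ := h
    exact (hl hx).1
  · obtain ⟨c, -, hy⟩ := h
    exact (hl hy).2

lemma mem_iff_of_wordRel_replicate {C : Set ℕ} (hC : RelClosed (sRel s) C) {p : ℕ} {b : Bool}
    {x y : ℕ} (h : wordRel s (List.replicate p (Sum.inr b)) x y) : x ∈ C ↔ y ∈ C := by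
  induction p generalizing y with
  | zero => exact iff_of_eq (congrArg (· ∈ C) h)
  | succ p ih =>
    obtain ⟨c, hc, hl⟩ := h
    rw [ih hc]
    cases b
    exacts [(hC y c hl).symm, hC c y hl]

lemma wordRel_replicate_of_not_mem {C : Set ℕ} (hC : RelClosed (sRel t) C)
    (hts : ∀ a b, (a, b) ∈ t → a ∉ C → (a, b) ∈ s) {p : ℕ} {b : Bool} {x y : ℕ} (hx : x ∉ C)
    (h : wordRel t (List.replicate p (Sum.inr b)) x y) :
    wordRel s (List.replicate p (Sum.inr b)) x y := by
  induction p generalizing y with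
  | zero => exact h
  | succ p ih =>
    obtain ⟨c, hc, hl⟩ := h
    have hcC : c ∉ C := fun hcC => hx ((mem_iff_of_wordRel_replicate hC hc).2 hcC)
    refine ⟨c, ih hc, ?_⟩
    cases b
    · exact hts y c hl fun hy => hcC ((hC y c hl).1 hy)
    · exact hts c y hl hcC

end Words

section Orbits

variable {R : ℕ → ℕ → Prop}

lemma mem_relOrbit_self (R : ℕ → ℕ → Prop) (n : ℕ) : n ∈ relOrbit R n :=
  fun _ hO => hO.1

lemma relClosed_relOrbit (R : ℕ → ℕ → Prop) (n : ℕ) : RelClosed R (relOrbit R n) :=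
  fun a b hab => ⟨fun ha O hO => (hO.2 a b hab).1 (ha O hO),
    fun hb O hO => (hO.2 a b hab).2 (hb O hO)⟩

lemma relOrbit_subset {n : ℕ} {O : Set ℕ} (hn : n ∈ O) (hO : RelClosed R O) :
    relOrbit R n ⊆ O :=
  Set.sInter_subset_of_mem ⟨hn, hO⟩

end Orbits

lemma formPerm_pow_apply_ne_self {α : Type*} [DecidableEq α] {l : List α} (hnd : l.Nodup)
    {x : α} (hx : x ∈ l) {p : ℕ} (hp : 0 < p) (hpl : p < l.length) : (l.formPerm ^ p) x ≠ x := by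
  obtain ⟨i, hi, rfl⟩ := List.getElem_of_mem hx
  rw [List.formPerm_pow_apply_getElem _ hnd, Ne, hnd.getElem_inj_iff]
  rcases lt_or_ge (i + p) l.length with h | h
  · rw [Nat.mod_eq_of_lt h]; omega
  · rw [Nat.mod_eq_sub_mod h, Nat.mod_eq_of_lt (by omega)]; omega

section FormPerm

variable {s : Set (ℕ × ℕ)} {l : List ℕ}

lemma relClosed_of_formPerm (hs : PartInj s) (hl : ∀ x ∈ l, (x, l.formPerm x) ∈ s) :
    RelClosed (sRel s) {x | x ∈ l} := by
  intro a b hab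
  refine ⟨fun ha => ?_, fun hb => ?_⟩
  · rw [← hs.1 (hl a ha) hab]
    exact List.formPerm_mem_iff_mem.2 ha
  · have hb' : l.formPerm (l.formPerm.symm b) ∈ l := by simpa using hb
    have hpre := hl _ (List.formPerm_mem_iff_mem.1 hb')
    rw [Equiv.apply_symm_apply] at hpre
    rw [hs.2 hab hpre]
    exact List.formPerm_mem_iff_mem.1 hb'

lemma relOrbit_mem_relClosedOrbits_of_formPerm (hs : PartInj s)
    (hl : ∀ x ∈ l, (x, l.formPerm x) ∈ s) {n : ℕ} (hn : n ∈ l) :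
    relOrbit (sRel s) n ∈ relClosedOrbits (sRel s) := by
  refine ⟨⟨n, rfl⟩, fun x hx => ?_⟩
  have hxl : x ∈ l := relOrbit_subset hn (relClosed_of_formPerm hs hl) hx
  have hpre : l.formPerm.symm x ∈ l := List.formPerm_mem_iff_mem.1 (by simpa using hxl)
  exact ⟨⟨_, hl x hxl⟩, ⟨_, by simpa [sRel] using hl _ hpre⟩⟩

lemma relOrbit_eq_of_formPerm (hs : PartInj s) (hl : ∀ x ∈ l, (x, l.formPerm x) ∈ s)
    (hnd : l.Nodup) {n : ℕ} (hn : n ∈ l) : relOrbit (sRel s) n = {x | x ∈ l} := by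
  refine (relOrbit_subset hn (relClosed_of_formPerm hs hl)).antisymm fun x hx => ?_
  have hiter : ∀ p : ℕ, (l.formPerm ^ p) n ∈ l ∧ (l.formPerm ^ p) n ∈ relOrbit (sRel s) n := by
    intro p
    induction p with
    | zero => exact ⟨hn, mem_relOrbit_self _ n⟩
    | succ p ih =>
      rw [pow_succ', Equiv.Perm.mul_apply]
      exact ⟨List.formPerm_mem_iff_mem.2 ih.1,
        (relClosed_relOrbit _ n _ _ (hl _ ih.1)).1 ih.2⟩
  obtain ⟨i, hi, rfl⟩ := List.getElem_of_mem hn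
  obtain ⟨j, hj, rfl⟩ := List.getElem_of_mem hx
  have hij : (i + (j + l.length - i)) % l.length = j := by
    rw [show i + (j + l.length - i) = j + l.length by omega, Nat.add_mod_right,
      Nat.mod_eq_of_lt hj]
  have := (hiter (j + l.length - i)).2
  rw [List.formPerm_pow_apply_getElem _ hnd] at this
  convert this using 2
  exact hij.symm

end FormPerm

def closeCycle (s : Set (ℕ × ℕ)) (l : List ℕ) : Set (ℕ × ℕ) :=
  s ∪ (fun x => (x, l.formPerm x)) '' {x | x ∈ l}

section CloseCycle

variable {s : Set (ℕ × ℕ)} {l : List ℕ}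

lemma formPerm_mem_closeCycle {x : ℕ} (hx : x ∈ l) : (x, l.formPerm x) ∈ closeCycle s l :=
  Or.inr ⟨x, hx, rfl⟩

lemma closeCycle_finite (hs : s.Finite) : (closeCycle s l).Finite :=
  hs.union (l.finite_toSet.image _)

lemma mem_closeCycle_iff (hsl : ∀ x y, (x, y) ∈ s → x ∈ l ∨ y ∈ l → l.formPerm x = y)
    {x y : ℕ} (hxy : x ∈ l ∨ y ∈ l) : (x, y) ∈ closeCycle s l ↔ l.formPerm x = y := by
  refine ⟨?_, ?_⟩
  · rintro (h | ⟨z, -, hz⟩)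
    · exact hsl x y h hxy
    · simp only [Prod.mk.injEq] at hz
      rw [← hz.1, hz.2]
  · rintro rfl
    exact formPerm_mem_closeCycle (hxy.elim id List.formPerm_mem_iff_mem.1)

lemma mem_of_mem_closeCycle_of_not_mem {x y : ℕ} (h : (x, y) ∈ closeCycle s l) (hx : x ∉ l) :
    (x, y) ∈ s :=
  h.resolve_right fun ⟨z, hz, hzx⟩ => hx (by simp_all [Prod.ext_iff])

lemma partInj_closeCycle (hs : PartInj s)
    (hsl : ∀ x y, (x, y) ∈ s → x ∈ l ∨ y ∈ l → l.formPerm x = y) :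
    PartInj (closeCycle s l) := by
  have hnot : ∀ {a c}, (a, c) ∈ closeCycle s l → c ∉ l → a ∉ l := fun hac hc ha =>
    hc ((mem_closeCycle_iff hsl (Or.inl ha)).1 hac ▸ List.formPerm_mem_iff_mem.2 ha)
  refine ⟨fun a b c hab hac => ?_, fun a b c hac hbc => ?_⟩
  · by_cases ha : a ∈ l
    · rw [← (mem_closeCycle_iff hsl (Or.inl ha)).1 hab, (mem_closeCycle_iff hsl (Or.inl ha)).1 hac]
    · exact hs.1 (mem_of_mem_closeCycle_of_not_mem hab ha) (mem_of_mem_closeCycle_of_not_mem hac ha)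
  · by_cases hc : c ∈ l
    · exact l.formPerm.injective (((mem_closeCycle_iff hsl (Or.inr hc)).1 hac).trans
        ((mem_closeCycle_iff hsl (Or.inr hc)).1 hbc).symm)
    · exact hs.2 (mem_of_mem_closeCycle_of_not_mem hac (hnot hac hc))
        (mem_of_mem_closeCycle_of_not_mem hbc (hnot hbc hc))

lemma wordRel_closeCycle_replicate_iff
    (hsl : ∀ x y, (x, y) ∈ s → x ∈ l ∨ y ∈ l → l.formPerm x = y) {x : ℕ} (hx : x ∈ l)
    (p y : ℕ) :
    wordRel (closeCycle s l) (List.replicate p (Sum.inr true)) x y ↔ (l.formPerm ^ p) x = y := by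
  induction p generalizing y with
  | zero => exact Iff.rfl
  | succ p ih =>
    have hp : (l.formPerm ^ p) x ∈ l := by
      simpa using List.form_perm_zpow_apply_mem_imp_mem l x hx p
    simp only [List.replicate_succ, wordRel, letterRel, ih, exists_eq_left', pow_succ',
      Equiv.Perm.mul_apply]
    exact mem_closeCycle_iff hsl (Or.inl hp)

end CloseCycle

def IsMaximalPath (s : Set (ℕ × ℕ)) (l : List ℕ) : Prop :=
  l.Nodup ∧ l.IsChain (sRel s) ∧ (∀ h : 0 < l.length, l[0] ∉ pran s) ∧
    ∀ h : 0 < l.length, l[l.length - 1] ∉ pdom s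

section Paths

variable {s : Set (ℕ × ℕ)} {l : List ℕ}

lemma IsMaximalPath.exists_getElem (hs : PartInj s) (hl : IsMaximalPath s l) {x y : ℕ}
    (hxy : (x, y) ∈ s) (h : x ∈ l ∨ y ∈ l) :
    ∃ i, ∃ hi : i + 1 < l.length, l[i] = x ∧ l[i + 1] = y := by
  obtain ⟨-, hch, hhead, hlast⟩ := hl
  rw [List.isChain_iff_getElem] at hch
  rcases h with hx | hy
  · obtain ⟨i, hi, rfl⟩ := List.getElem_of_mem hx
    have hi1 : i + 1 < l.length := by
      by_contra! h'
      exact hlast (by omega) (by convert mem_pdom.2 ⟨y, hxy⟩ using 2; omega)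
    exact ⟨i, hi1, rfl, hs.1 (hch i hi1) hxy⟩
  · obtain ⟨j, hj, rfl⟩ := List.getElem_of_mem hy
    rcases j with _ | i
    · exact absurd (mem_pran.2 ⟨x, hxy⟩) (hhead hj)
    · exact ⟨i, hj, hs.2 (hch i hj) hxy, rfl⟩

lemma formPerm_mem_of_isChain (hnd : l.Nodup) (hch : l.IsChain (sRel s))
    (hcl : ∀ h : 0 < l.length, (l[l.length - 1], l[0]) ∈ s) : ∀ x ∈ l, (x, l.formPerm x) ∈ s := by
  intro x hx
  obtain ⟨i, hi, rfl⟩ := List.getElem_of_mem hx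
  rw [List.formPerm_apply_getElem _ hnd]
  rcases lt_or_ge (i + 1) l.length with h | h
  · simp only [Nat.mod_eq_of_lt h]
    exact List.isChain_iff_getElem.1 hch i h
  · convert hcl (by omega) using 3
    · omega
    · rw [show i + 1 = l.length by omega, Nat.mod_self]

lemma eq_getElem_last_of_rel_head (hs : PartInj s) (hnd : l.Nodup) (hch : l.IsChain (sRel s))
    {x : ℕ} (hx : x ∈ l) (hpos : 0 < l.length) (h : (x, l[0]) ∈ s) : x = l[l.length - 1] := by
  obtain ⟨i, hi, rfl⟩ := List.getElem_of_mem hx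
  rcases lt_or_ge (i + 1) l.length with h' | h'
  · have := hs.1 (List.isChain_iff_getElem.1 hch i h') h
    rw [hnd.getElem_inj_iff] at this
    omega
  · congr 1
    omega

lemma eq_getElem_zero_of_rel_last (hs : PartInj s) (hnd : l.Nodup) (hch : l.IsChain (sRel s))
    {y : ℕ} (hy : y ∈ l) (hpos : 0 < l.length) (h : (l[l.length - 1], y) ∈ s) : y = l[0] := by
  obtain ⟨j, hj, rfl⟩ := List.getElem_of_mem hy
  rcases j with _ | i
  · rfl
  · have := hs.2 (List.isChain_iff_getElem.1 hch i hj) h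
    rw [hnd.getElem_inj_iff] at this
    omega

lemma isChain_cons_of_rel_getElem_zero {α : Type*} {R : α → α → Prop} {l : List α}
    (hch : l.IsChain R) (hpos : 0 < l.length) {x : α} (h : R x l[0]) : (x :: l).IsChain R := by
  cases l with
  | nil => simp at hpos
  | cons a l => exact List.isChain_cons_cons.2 ⟨h, hch⟩

lemma isChain_append_singleton_of_rel_getElem_last {α : Type*} {R : α → α → Prop} {l : List α}
    (hch : l.IsChain R) (hpos : 0 < l.length) {y : α} (h : R l[l.length - 1] y) :
    (l ++ [y]).IsChain R := by
  refine List.isChain_append.2 ⟨hch, List.isChain_singleton y, fun a ha b hb => ?_⟩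
  simp only [List.getLast?_eq_getElem?,
    List.getElem?_eq_getElem (by omega : l.length - 1 < l.length), Option.mem_def, Option.some.injEq, List.head?_cons] at ha hb
  rwa [← ha, ← hb]

lemma exists_longest_mem {α : Type*} {P : Set (List α)} (hP : P.Nonempty) {N : ℕ}
    (hN : ∀ l ∈ P, l.length ≤ N) : ∃ l ∈ P, ∀ l' ∈ P, l'.length ≤ l.length := by
  obtain ⟨l, hl, hmin⟩ := (measure fun l : List α => N - l.length).wf.has_min P hP
  refine ⟨l, hl, fun l' hl' => ?_⟩
  have h := hmin l' hl'
  change ¬(N - l'.length < N - l.length) at h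
  have := hN l' hl'
  omega

lemma exists_isMaximalPath (hfin : s.Finite) (hs : PartInj s) {n : ℕ}
    (hn : n ∉ ⋃₀ relClosedOrbits (sRel s)) : ∃ l, IsMaximalPath s l ∧ n ∈ l := by
  classical
  set S := pdom s ∪ pran s ∪ {n}
  have hS : S.Finite := ((hfin.image _).union (hfin.image _)).union (Set.finite_singleton n)
  set P : Set (List ℕ) := {l | l.Nodup ∧ l.IsChain (sRel s) ∧ n ∈ l ∧ ∀ x ∈ l, x ∈ S}
  obtain ⟨l, ⟨hnd, hch, hnl, hlS⟩, hlongest⟩ := exists_longest_mem (P := P) ⟨[n], by simp [P, S]⟩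
    (N := hS.toFinset.card) fun l hl => by
      rw [← List.toFinset_card_of_nodup hl.1]
      exact Finset.card_le_card fun x hx =>
        hS.mem_toFinset.2 (hl.2.2.2 x (List.mem_toFinset.1 hx))
  have hpos : 0 < l.length := List.length_pos_of_mem hnl
  -- An edge into the head or out of the last point of a longest chain cannot prolong it,
  -- so it closes the chain into a cycle, which would be a closed orbit through `n`.
  have hcycle : (l[l.length - 1], l[0]) ∉ s := fun h =>
    hn ⟨_, relOrbit_mem_relClosedOrbits_of_formPerm hs
      (formPerm_mem_of_isChain hnd hch fun _ => h) hnl, mem_relOrbit_self _ n⟩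
  refine ⟨l, ⟨hnd, hch, fun _ hhead => ?_, fun _ hlast => ?_⟩, hnl⟩
  · obtain ⟨x, hx⟩ := mem_pran.1 hhead
    by_cases hxl : x ∈ l
    · exact hcycle (eq_getElem_last_of_rel_head hs hnd hch hxl hpos hx ▸ hx)
    · have := hlongest (x :: l) ⟨List.nodup_cons.2 ⟨hxl, hnd⟩,
        isChain_cons_of_rel_getElem_zero hch hpos hx, List.mem_cons_of_mem _ hnl, fun z hz => ?_⟩
      · simp at this
      · rcases List.mem_cons.1 hz with rfl | hz
        exacts [Or.inl (Or.inl (mem_pdom.2 ⟨_, hx⟩)), hlS z hz]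
  · obtain ⟨y, hy⟩ := mem_pdom.1 hlast
    by_cases hyl : y ∈ l
    · exact hcycle (eq_getElem_zero_of_rel_last hs hnd hch hyl hpos hy ▸ hy)
    · have := hlongest (l ++ [y]) ⟨List.concat_eq_append ▸ hnd.concat hyl,
        isChain_append_singleton_of_rel_getElem_last hch hpos hy, List.mem_append_left _ hnl,
        fun z hz => ?_⟩
      · simp at this
      · rcases List.mem_append.1 hz with hz | hz
        · exact hlS z hz
        · rw [List.mem_singleton.1 hz]
          exact Or.inl (Or.inr (mem_pran.2 ⟨_, hy⟩))

lemma wordRel_replicate_of_isChain (hch : l.IsChain (sRel s)) {i p : ℕ} (h : i + p < l.length) :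
    wordRel s (List.replicate p (Sum.inr true)) l[i] l[i + p] := by
  induction p with
  | zero => rfl
  | succ p ih => exact ⟨_, ih (by omega), List.isChain_iff_getElem.1 hch (i + p) (by omega)⟩

end Paths

def IsGenericOver {α : Type*} (Γ : Set (Equiv.Perm α)) (S : Set α) (L : List α) : Prop :=
  L.Nodup ∧ ∀ x ∈ L, x ∉ S ∧ ∀ g ∈ Γ, ∀ y, y ∈ S ∨ y ∈ L → g x ≠ y ∧ g y ≠ x

section Generic

variable {α : Type*} {Γ : Set (Equiv.Perm α)} {S : Set α} {L : List α}

lemma IsGenericOver.mem_of_apply_mem (hL : IsGenericOver Γ S L) {g : Equiv.Perm α} (hg : g ∈ Γ)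
    {x : α} (hx : x ∈ S ∨ x ∈ L) (hgx : g x ∈ S ∨ g x ∈ L) : x ∈ S ∧ g x ∈ S := by
  have hxS : x ∈ S := hx.resolve_right fun hxL => ((hL.2 x hxL).2 g hg _ hgx).1 rfl
  exact ⟨hxS, hgx.resolve_right fun hgxL => ((hL.2 _ hgxL).2 g hg x (Or.inl hxS)).2 rfl⟩

lemma exists_isGenericOver [Infinite α] (hS : S.Finite) (hΓ : Γ.Finite)
    (hfix : ∀ g ∈ Γ, {x | g x = x}.Finite) (q : ℕ) :
    ∃ L : List α, L.length = q ∧ IsGenericOver Γ S L := by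
  induction q with
  | zero => exact ⟨[], rfl, List.nodup_nil, by simp⟩
  | succ q ih =>
    obtain ⟨L, hlen, hnd, hL⟩ := ih
    set T := S ∪ {y | y ∈ L}
    have hT : T.Finite := hS.union L.finite_toSet
    have hbad : (T ∪ ⋃ g ∈ Γ, (g ⁻¹' T ∪ g '' T ∪ {x | g x = x})).Finite :=
      hT.union (hΓ.biUnion fun g hg =>
        ((hT.preimage g.injective.injOn).union (hT.image g)).union (hfix g hg))
    obtain ⟨z, hz⟩ := hbad.exists_notMem
    have hzT : ¬(z ∈ S ∨ z ∈ L) := fun h => hz (Or.inl h)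
    have hzΓ : ∀ g ∈ Γ, g z ≠ z ∧ ∀ y, y ∈ S ∨ y ∈ L → g z ≠ y ∧ g y ≠ z := fun g hg =>
      ⟨fun h => hz (Or.inr (Set.mem_biUnion hg (Or.inr h))), fun y hy =>
        ⟨fun h => hz (Or.inr (Set.mem_biUnion hg (Or.inl (Or.inl (by rwa [Set.mem_preimage, h]))))),
          fun h => hz (Or.inr (Set.mem_biUnion hg (Or.inl (Or.inr ⟨y, hy, h⟩))))⟩⟩
    refine ⟨z :: L, by simp [hlen], List.nodup_cons.2 ⟨fun h => hzT (Or.inr h), hnd⟩,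
      fun x hx => ?_⟩
    simp only [List.mem_cons] at hx ⊢
    rcases hx with rfl | hx
    · refine ⟨fun h => hzT (Or.inl h), fun g hg y hy => ?_⟩
      rcases hy with hy | rfl | hy
      · exact (hzΓ g hg).2 y (Or.inl hy)
      · exact ⟨(hzΓ g hg).1, (hzΓ g hg).1⟩
      · exact (hzΓ g hg).2 y (Or.inr hy)
    · refine ⟨(hL x hx).1, fun g hg y hy => ?_⟩
      rcases hy with hy | rfl | hy
      · exact (hL x hx).2 g hg y (Or.inl hy)
      · exact ⟨((hzΓ g hg).2 x (Or.inr hx)).2, fun h => ((hzΓ g hg).2 x (Or.inr hx)).1 h⟩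
      · exact (hL x hx).2 g hg y (Or.inr hy)

end Generic

section Blocks

variable {t : Set (ℕ × ℕ)} {F : Set ℕ}

lemma inl_mem_flatten_blockWord {bs : List (Perm' × ℤ)} {q : Perm' × ℤ} (hq : q ∈ bs) :
    (Sum.inl q.1 : Letter) ∈ (bs.map blockWord).flatten :=
  List.mem_flatten.2 ⟨blockWord q, List.mem_map_of_mem hq, List.mem_cons_self⟩

lemma natAbs_le_length_flatten_blockWord {bs : List (Perm' × ℤ)} {q : Perm' × ℤ} (hq : q ∈ bs) :
    q.2.natAbs ≤ ((bs.map blockWord).flatten).length := by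
  have := (List.sublist_flatten_of_mem (List.mem_map_of_mem (f := blockWord) hq)).length_le
  simp only [blockWord, xpow_eq_replicate, List.length_cons, List.length_replicate] at this
  omega

lemma mem_of_wordRel_xpow (hF : ∀ a b, (a, b) ∈ t → a ∈ F ∧ b ∈ F) {k : ℤ} (hk : k ≠ 0)
    {x y : ℕ} (h : wordRel t (xpow k) x y) : x ∈ F ∧ y ∈ F := by
  rw [xpow_eq_replicate] at h
  exact mem_of_wordRel_replicate hF (Int.natAbs_ne_zero.2 hk) h

lemma mem_of_wordRel_flatten_blockWord (hF : ∀ a b, (a, b) ∈ t → a ∈ F ∧ b ∈ F)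
    {bs : List (Perm' × ℤ)} (hbs : ∀ q ∈ bs, q.2 ≠ 0) (hne : bs ≠ []) {x y : ℕ}
    (h : wordRel t ((bs.map blockWord).flatten) x y) :
    x ∈ F ∧ ∃ q ∈ bs, ∃ d ∈ F, q.1 d = y := by
  induction bs generalizing y with
  | nil => exact absurd rfl hne
  | cons q bs ih =>
    rw [List.map_cons, List.flatten_cons, wordRel_append] at h
    obtain ⟨c, hc, d, hd, hdy⟩ := h
    have hcd := mem_of_wordRel_xpow hF (hbs q List.mem_cons_self) hd
    refine ⟨?_, q, List.mem_cons_self, d, hcd.2, hdy⟩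
    rcases eq_or_ne bs [] with rfl | hbs'
    · exact (show x = c from hc) ▸ hcd.1
    · exact (ih (fun q hq => hbs q (List.mem_cons_of_mem _ hq)) hbs' hc).1

end Blocks

/-- `path` is the orbit of `n`, to be closed into a cycle through the fresh points `fr`; `M` bounds
the lengths of the words whose fixed points must not change. -/
structure ClosingSetup (s : Set (ℕ × ℕ)) (path fr : List ℕ) (D : Set ℕ) (Γ : Set Perm')
    (M : ℕ) : Prop where
  partInj : PartInj s
  maximalPath : IsMaximalPath s path
  field_subset : ∀ a b, (a, b) ∈ s → a ∈ D ∧ b ∈ D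
  path_subset : ∀ x ∈ path, x ∈ D
  generic : IsGenericOver Γ D fr
  lt_length : M < fr.length

namespace ClosingSetup

variable {s : Set (ℕ × ℕ)} {path fr : List ℕ} {D : Set ℕ} {Γ : Set Perm'} {M : ℕ}

lemma nodup (h : ClosingSetup s path fr D Γ M) : (path ++ fr).Nodup :=
  List.nodup_append.2 ⟨h.maximalPath.1, h.generic.1, fun a ha b hb hab =>
    (h.generic.2 b hb).1 (hab ▸ h.path_subset a ha)⟩

lemma mem_path_of_mem (h : ClosingSetup s path fr D Γ M) {x : ℕ} (hx : x ∈ D)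
    (hxc : x ∈ path ++ fr) : x ∈ path :=
  (List.mem_append.1 hxc).resolve_right fun hfr => (h.generic.2 x hfr).1 hx

lemma formPerm_apply (h : ClosingSetup s path fr D Γ M) :
    ∀ x y, (x, y) ∈ s → x ∈ path ++ fr ∨ y ∈ path ++ fr → (path ++ fr).formPerm x = y := by
  intro x y hxy hc
  have hD := h.field_subset x y hxy
  obtain ⟨i, hi, rfl, rfl⟩ := h.maximalPath.exists_getElem h.partInj hxy
    (hc.imp (h.mem_path_of_mem hD.1) (h.mem_path_of_mem hD.2))
  have := List.formPerm_apply_lt_getElem (path ++ fr) h.nodup i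
    (by rw [List.length_append]; omega)
  rwa [List.getElem_append_left, List.getElem_append_left] at this

lemma partInj_closeCycle (h : ClosingSetup s path fr D Γ M) :
    PartInj (closeCycle s (path ++ fr)) :=
  ZhangForcing.partInj_closeCycle h.partInj h.formPerm_apply

lemma relClosed_closeCycle (h : ClosingSetup s path fr D Γ M) :
    RelClosed (sRel (closeCycle s (path ++ fr))) {x | x ∈ path ++ fr} :=
  relClosed_of_formPerm h.partInj_closeCycle fun _ => formPerm_mem_closeCycle

lemma field_closeCycle_subset (h : ClosingSetup s path fr D Γ M) :
    ∀ a b, (a, b) ∈ closeCycle s (path ++ fr) → a ∈ D ∪ {x | x ∈ fr} ∧ b ∈ D ∪ {x | x ∈ fr} := by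
  have hc : ∀ x ∈ path ++ fr, x ∈ D ∪ {x | x ∈ fr} := fun x hx =>
    (List.mem_append.1 hx).imp (h.path_subset x) id
  rintro a b (hab | ⟨z, hz, hzab⟩)
  · exact (h.field_subset a b hab).imp Or.inl Or.inl
  · simp only [Prod.mk.injEq] at hzab
    rw [← hzab.1, ← hzab.2]
    exact ⟨hc z hz, hc _ (List.formPerm_mem_iff_mem.2 hz)⟩

lemma wordRel_of_formPerm_pow (h : ClosingSetup s path fr D Γ M) {x d p : ℕ} (hx : x ∈ path)
    (hd : d ∈ path) (hp : p ≤ M) (hxd : ((path ++ fr).formPerm ^ p) x = d) :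
    wordRel s (List.replicate p (Sum.inr true)) x d := by
  obtain ⟨i, hi, rfl⟩ := List.getElem_of_mem hx
  obtain ⟨j, hj, rfl⟩ := List.getElem_of_mem hd
  -- the run from `path[i]` does not wrap around the cycle, since `p ≤ M < fr.length`
  have hK : i + p < (path ++ fr).length := by
    have := h.lt_length
    rw [List.length_append]
    omega
  rw [← List.getElem_append_left (bs := fr) hi (h' := by omega),
    List.formPerm_pow_apply_getElem _ h.nodup,
    ← List.getElem_append_left (bs := fr) hj (h' := by rw [List.length_append]; omega),
    h.nodup.getElem_inj_iff, Nat.mod_eq_of_lt hK] at hxd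
  subst hxd
  exact wordRel_replicate_of_isChain h.maximalPath.2.1 hj

lemma wordRel_replicate (h : ClosingSetup s path fr D Γ M) {x d p : ℕ} {b : Bool} (hx : x ∈ D)
    (hd : d ∈ D) (hp : p ≤ M)
    (hr : wordRel (closeCycle s (path ++ fr)) (List.replicate p (Sum.inr b)) x d) :
    wordRel s (List.replicate p (Sum.inr b)) x d := by
  by_cases hxc : x ∈ path ++ fr
  · have hdc : d ∈ path ++ fr := (mem_iff_of_wordRel_replicate h.relClosed_closeCycle hr).1 hxc
    have hx' := h.mem_path_of_mem hx hxc
    have hd' := h.mem_path_of_mem hd hdc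
    cases b
    · rw [wordRel_replicate_false_iff] at hr ⊢
      exact h.wordRel_of_formPerm_pow hd' hx' hp
        ((wordRel_closeCycle_replicate_iff h.formPerm_apply hdc p x).1 hr)
    · exact h.wordRel_of_formPerm_pow hx' hd' hp
        ((wordRel_closeCycle_replicate_iff h.formPerm_apply hxc p d).1 hr)
  · exact wordRel_replicate_of_not_mem h.relClosed_closeCycle
      (fun _ _ => mem_of_mem_closeCycle_of_not_mem) hxc hr

lemma wordRel_blockWord (h : ClosingSetup s path fr D Γ M) {g : Perm'} {k : ℤ} (hg : g ∈ Γ)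
    (hk : k ≠ 0) (hkM : k.natAbs ≤ M) {x y : ℕ} (hx : x ∈ D) (hy : y ∈ D ∪ {x | x ∈ fr})
    (hr : wordRel (closeCycle s (path ++ fr)) (blockWord (g, k)) x y) :
    wordRel s (blockWord (g, k)) x y ∧ y ∈ D := by
  obtain ⟨d, hrun, rfl⟩ := hr
  obtain ⟨hd, hgd⟩ := h.generic.mem_of_apply_mem hg
    (mem_of_wordRel_xpow h.field_closeCycle_subset hk hrun).2 hy
  rw [xpow_eq_replicate] at hrun
  exact ⟨⟨d, by rw [xpow_eq_replicate]; exact h.wordRel_replicate hx hd hkM hrun, rfl⟩, hgd⟩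

lemma wordRel_flatten_blockWord (h : ClosingSetup s path fr D Γ M) {bs : List (Perm' × ℤ)}
    (hbs : ∀ q ∈ bs, q.1 ∈ Γ ∧ q.2 ≠ 0 ∧ q.2.natAbs ≤ M) {x y : ℕ} (hx : x ∈ D)
    (hy : y ∈ D ∪ {x | x ∈ fr})
    (hr : wordRel (closeCycle s (path ++ fr)) ((bs.map blockWord).flatten) x y) :
    wordRel s ((bs.map blockWord).flatten) x y ∧ y ∈ D := by
  induction bs generalizing y with
  | nil => exact ⟨hr, (show x = y from hr) ▸ hx⟩
  | cons q bs ih =>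
    rw [List.map_cons, List.flatten_cons, wordRel_append] at hr ⊢
    obtain ⟨c, hc, hq⟩ := hr
    obtain ⟨hgq, hkq, hkM⟩ := hbs q List.mem_cons_self
    have hcU : c ∈ D ∪ {x | x ∈ fr} := by
      obtain ⟨d, hrun, -⟩ := hq
      exact (mem_of_wordRel_xpow h.field_closeCycle_subset hkq hrun).1
    obtain ⟨hc', hcD⟩ := ih (fun q hq => hbs q (List.mem_cons_of_mem _ hq)) hcU hc
    obtain ⟨hq', hyD⟩ := h.wordRel_blockWord hgq hkq hkM hcD hy hq
    exact ⟨⟨c, hc', hq'⟩, hyD⟩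

lemma wordFix_subset (h : ClosingSetup s path fr D Γ M) {G : Subgroup Perm'} {w : Word}
    (hw : IsNice G w) (hΓ : ∀ g, (Sum.inl g : Letter) ∈ w → g ∈ Γ) (hwM : w.length ≤ M) :
    wordFix (closeCycle s (path ++ fr)) w ⊆ wordFix s w := by
  intro x hx
  change wordRel _ w x x at hx
  change wordRel s w x x
  rcases hw with ⟨k, hk, rfl⟩ | ⟨bs, hne, hbs, -, rfl⟩
  · have hxpow : xpow k = List.replicate k (Sum.inr true) := by simp [xpow_eq_replicate]
    rw [hxpow] at hx hwM ⊢
    rw [List.length_replicate] at hwM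
    by_cases hxc : x ∈ path ++ fr
    · refine absurd ((wordRel_closeCycle_replicate_iff h.formPerm_apply hxc k x).1 hx)
        (formPerm_pow_apply_ne_self h.nodup hxc hk ?_)
      have := h.lt_length
      rw [List.length_append]
      omega
    · exact wordRel_replicate_of_not_mem h.relClosed_closeCycle
        (fun _ _ => mem_of_mem_closeCycle_of_not_mem) hxc hx
  · have hbs' : ∀ q ∈ bs, q.1 ∈ Γ ∧ q.2 ≠ 0 ∧ q.2.natAbs ≤ M := fun q hq =>
      ⟨hΓ _ (inl_mem_flatten_blockWord hq), (hbs q hq).2.2,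
        (natAbs_le_length_flatten_blockWord hq).trans hwM⟩
    obtain ⟨hxU, q, hq, d, hdU, hdx⟩ := mem_of_wordRel_flatten_blockWord h.field_closeCycle_subset
      (fun q hq => (hbs' q hq).2.1) hne hx
    have hxD : x ∈ D := hdx ▸ (h.generic.mem_of_apply_mem (hbs' q hq).1 hdU (hdx ▸ hxU)).2
    exact (h.wordRel_flatten_blockWord hbs' hxD (Or.inl hxD) hx).1

end ClosingSetup

lemma ncard_setOf_mem {l : List ℕ} (hl : l.Nodup) : {x | x ∈ l}.ncard = l.length := by
  classical
  rw [← List.coe_toFinset, Set.ncard_coe_finset, List.toFinset_card_of_nodup hl]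

lemma finite_setOf_inl_mem {E : Set Word} (hE : E.Finite) :
    {g : Perm' | ∃ w ∈ E, (Sum.inl g : Letter) ∈ w}.Finite :=
  (hE.biUnion fun w _ => w.finite_toSet.preimage Sum.inl_injective.injOn).subset
    fun _ ⟨_, hw, hg⟩ => Set.mem_biUnion hw hg

lemma IsNice.mem_of_inl_mem {G : Subgroup Perm'} {w : Word} (hw : IsNice G w) {g : Perm'}
    (hg : (Sum.inl g : Letter) ∈ w) : g ∈ G ∧ g ≠ 1 := by
  have hx : ∀ k, (Sum.inl g : Letter) ∉ xpow k := fun k h => by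
    rw [xpow_eq_replicate] at h
    simp at h
  rcases hw with ⟨k, -, rfl⟩ | ⟨bs, -, hbs, -, rfl⟩
  · exact absurd hg (hx k)
  · obtain ⟨_, hl, hgq⟩ := List.mem_flatten.1 hg
    obtain ⟨q, hq, rfl⟩ := List.mem_map.1 hl
    rcases List.mem_cons.1 hgq with hgq | hgq
    · rw [Sum.inl_injective hgq]
      exact ⟨(hbs q hq).1, (hbs q hq).2.1⟩
    · exact absurd hgq (hx q.2)

end ZhangForcing

open ZhangForcing in
/-- Generic closing of orbits: if `n` does not belong to any closed orbit of
`s`, then for all sufficiently large `k` there is an extension `(t,E) ≤ (s,E)`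
in which the orbit of `n` is closed and has cardinality exactly `k`. -/
theorem statement7 (G : Subgroup Perm') (hG : Cofinitary G)
    (s : Set (ℕ × ℕ)) (E : Set Word) (hc : ZCond G s E)
    (n : ℕ) (hn : n ∉ ⋃₀ relClosedOrbits (sRel s)) :
    ∃ K : ℕ, ∀ k : ℕ, K < k →
      ∃ t : Set (ℕ × ℕ), ZCond G t E ∧ ZLe t E s E ∧
        relOrbit (sRel t) n ∈ relClosedOrbits (sRel t) ∧
        (relOrbit (sRel t) n).ncard = k := by
  obtain ⟨hsfin, hs, hEfin, hEnice⟩ := hc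
  obtain ⟨path, hpath, hnpath⟩ := exists_isMaximalPath hsfin hs hn
  have hΓfix : ∀ g ∈ {g : Perm' | ∃ w ∈ E, (Sum.inl g : Letter) ∈ w}, {x | g x = x}.Finite :=
    fun g ⟨w, hw, hg⟩ => ((hEnice w hw).mem_of_inl_mem hg).elim (hG g)
  obtain ⟨M, hM⟩ := (hEfin.image List.length).exists_le
  refine ⟨path.length + M, fun k hk => ?_⟩
  obtain ⟨fr, hfr, hgen⟩ := exists_isGenericOver
    (((hsfin.image Prod.fst).union (hsfin.image Prod.snd)).union path.finite_toSet)
    (finite_setOf_inl_mem hEfin) hΓfix (k - path.length)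
  have h : ClosingSetup s path fr _ _ M := ⟨hs, hpath, fun a b hab =>
    ⟨Or.inl (Or.inl (mem_pdom.2 ⟨b, hab⟩)), Or.inl (Or.inr (mem_pran.2 ⟨a, hab⟩))⟩,
    fun x hx => Or.inr hx, hgen, by omega⟩
  have hn' : n ∈ path ++ fr := List.mem_append_left _ hnpath
  have hcyc : ∀ x ∈ path ++ fr, (x, (path ++ fr).formPerm x) ∈ closeCycle s (path ++ fr) :=
    fun _ => formPerm_mem_closeCycle
  refine ⟨closeCycle s (path ++ fr), ⟨closeCycle_finite hsfin, h.partInj_closeCycle, hEfin, hEnice⟩,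
    ⟨Set.subset_union_left, subset_rfl, fun w hw => (h.wordFix_subset (hEnice w hw)
      (fun g hg => ⟨w, hw, hg⟩) (hM _ (Set.mem_image_of_mem _ hw))).antisymm
        fun x => wordRel_mono Set.subset_union_left⟩,
    relOrbit_mem_relClosedOrbits_of_formPerm h.partInj_closeCycle hcyc hn', ?_⟩
  rw [relOrbit_eq_of_formPerm h.partInj_closeCycle hcyc h.nodup hn', ncard_setOf_mem h.nodup,
    List.length_append, hfr]
  omega

end
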